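/- Let r > α > 0, τ > 0, and x₀ ∈ (0, r]. If T ≤ τ·ln(r/(r-α)), then r·(1 - e^{-T/τ}) - α ≤ ((r-α)/r - e^{-T/τ})·x₀, and consequently r - e^{-T/τ}(r - x₀) - α ≤ ((r-α)/r)·x₀. -/
import Mathlib

/-- Key 'overall decrease' inequality of Theorem 1. -/
theorem overall_decrease (r α τ T x₀ : ℝ)
    (hα : 0 < α) (hr : α < r) (hτ : 0 < τ)
    (hx₀ : 0 < x₀) (hx₀r : x₀ ≤ r)
    (hT : T ≤ τ * Real.log (r / (r - α))) :
    r * (1 - Real.exp (-T / τ)) - α ≤ ((r - α) / r - Real.exp (-T / τ)) * x₀ ∧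
    r - Real.exp (-T / τ) * (r - x₀) - α ≤ ((r - α) / r) * x₀ := by
  have hrα : 0 < r - α := by linarith
  have hr0 : 0 < r := by linarith
  have hE : (r - α) / r ≤ Real.exp (-T / τ) := by
    have h1 : -T / τ ≥ -Real.log (r / (r - α)) := by
      rw [ge_iff_le, neg_le, neg_div, neg_neg]
      exact (div_le_iff₀ hτ).mpr (by linarith [hT])
    have h2 : -Real.log (r / (r - α)) = Real.log ((r - α) / r) := by
      rw [← Real.log_inv, inv_div]
    calc (r - α) / r = Real.exp (Real.log ((r - α) / r)) :=
          (Real.exp_log (by positivity)).symm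
      _ ≤ Real.exp (-T / τ) := Real.exp_le_exp.mpr (by rw [← h2]; exact h1)
  have key : r * (1 - Real.exp (-T / τ)) - α ≤ ((r - α) / r - Real.exp (-T / τ)) * x₀ := by
    have h3 : (r - x₀) * ((r - α) / r - Real.exp (-T / τ)) ≤ 0 :=
      mul_nonpos_of_nonneg_of_nonpos (by linarith) (by linarith)
    have hdiv : r * ((r - α) / r) = r - α := by field_simp
    nlinarith [h3]
  refine ⟨key, ?_⟩
  nlinarith [key]
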